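/- Under Assumption ND, for every fixed A ≥ 0 the map P ↦ λ(S(A, P)), restricted to the interval [m_A, M_A] with m_A := min_{ξ ∈ [0, ξ_max]} g(A, ξ) and M_A := max_{ξ ∈ [0, ξ_max]} g(A, ξ), is a bijection from [m_A, M_A] onto [0, ξ_max]; in particular λ(S(A, m_A)) = 0 and λ(S(A, M_A)) = ξ_max. -/

import Mathlib

/-!
Write `g = b + A e`. A point where `g' ≠ 0` is isolated in its level set, so each level set
`{g = P}` is countable off the critical set `{g' = 0}`, which is null by ND; hence every level
set is null. Then `P ↦ λ{g ≤ P}` is continuous (dominated convergence) and strictly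
increasing on `g([0, ξmax])`, since between two values of `g` the sublevel sets differ by a
nonempty relatively open set. A continuous strictly increasing map of `[m_A, M_A]` is a
bijection onto `[λ{g ≤ m_A}, λ{g ≤ M_A}] = [0, ξmax]`.
-/

open MeasureTheory Set Filter Topology

theorem countable_setOf_eq_of_hasDerivAt_ne_zero {f f' : ℝ → ℝ} {s : Set ℝ}
    (hf : ∀ x ∈ s, HasDerivAt f (f' x) x) (hf' : ∀ x ∈ s, f' x ≠ 0) (c : ℝ) :
    {x ∈ s | f x = c}.Countable := by
  refine (HereditarilyLindelofSpace.isLindelof _).countable_of_isDiscrete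
    (isDiscrete_iff_nhdsNE.2 fun x hx => ?_)
  rw [inf_principal_eq_bot]
  filter_upwards [(hf x hx.1).eventually_ne (hf' x hx.1)] with y hy hyc
  exact hy (hyc.2.trans hx.2.symm)

theorem measure_setOf_eq_eq_zero_of_hasDerivAt {μ : Measure ℝ} [NullSingletonClass μ]
    {f f' : ℝ → ℝ} {s : Set ℝ} (hf : ∀ x ∈ s, HasDerivAt f (f' x) x)
    (hf' : μ {x ∈ s | f' x = 0} = 0) (c : ℝ) : μ {x ∈ s | f x = c} = 0 := by
  have hcount : {x ∈ {x ∈ s | f' x ≠ 0} | f x = c}.Countable :=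
    countable_setOf_eq_of_hasDerivAt_ne_zero (fun x hx => hf x hx.1) (fun x hx => hx.2) c
  refine measure_mono_null (fun x hx => ?_) (measure_union_null hf' (hcount.measure_zero μ))
  by_cases h : f' x = 0
  exacts [Or.inl ⟨hx.1, h⟩, Or.inr ⟨⟨hx.1, h⟩, hx.2⟩]

theorem continuous_measure_setOf_le {α : Type*} [TopologicalSpace α] [MeasurableSpace α]
    [OpensMeasurableSpace α] {μ : Measure α} {s : Set α} {g : α → ℝ} (hs : IsClosed s)
    (hμs : μ s ≠ ⊤) (hg : ContinuousOn g s) (hlevel : ∀ c, μ {x ∈ s | g x = c} = 0) :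
    Continuous fun c => μ {x ∈ s | g x ≤ c} := by
  have hmeas : ∀ c, MeasurableSet {x ∈ s | g x ≤ c} := fun c =>
    (hg.preimage_isClosed_of_isClosed hs isClosed_Iic).measurableSet
  refine continuous_iff_continuousAt.2 fun c => tendsto_measure_of_ae_tendsto_indicator (𝓝 c)
    (hmeas c) hmeas hs.measurableSet hμs (Eventually.of_forall fun _ => sep_subset _ _) ?_
  filter_upwards [measure_eq_zero_iff_ae_notMem.1 (hlevel c)] with x hx
  by_cases hxs : x ∈ s
  · rcases (show g x ≠ c from fun h => hx ⟨hxs, h⟩).lt_or_gt with h | h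
    · filter_upwards [eventually_gt_nhds h] with d hd
      simpa [hxs] using iff_of_true hd.le h.le
    · filter_upwards [eventually_lt_nhds h] with d hd
      simpa [hxs] using iff_of_false hd.not_ge h.not_ge
  · exact Eventually.of_forall fun _ => by simp [hxs]

theorem strictMonoOn_measure_setOf_le_Icc {μ : Measure ℝ} [μ.IsOpenPosMeasure]
    [IsFiniteMeasureOnCompacts μ] {g : ℝ → ℝ} {a b : ℝ} (hab : a < b)
    (hg : ContinuousOn g (Icc a b)) :
    StrictMonoOn (fun c => μ {x ∈ Icc a b | g x ≤ c}) (g '' Icc a b) := by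
  intro c hc d hd hcd
  -- `Ioo a b` is dense in `Icc a b`, so `g` takes a value in `Ioo c d` on `Ioo a b`, and the
  -- sublevel sets at `c` and `d` differ by a nonempty open set.
  have hmid : (c + d) / 2 ∈ closure (g '' Ioo a b) := by
    have hsub := (closure_Ioo hab.ne ▸ hg).image_closure
    rw [closure_Ioo hab.ne] at hsub
    exact hsub ((isPreconnected_Icc.image g hg).Icc_subset hc hd ⟨by linarith, by linarith⟩)
  obtain ⟨_, hgx, x, hx, rfl⟩ :=
    mem_closure_iff.1 hmid (Ioo c d) isOpen_Ioo ⟨by linarith, by linarith⟩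
  set W := Ioo a b ∩ g ⁻¹' Ioo c d
  have hW : IsOpen W := (hg.mono Ioo_subset_Icc_self).isOpen_inter_preimage isOpen_Ioo isOpen_Ioo
  have hdisj : Disjoint {x ∈ Icc a b | g x ≤ c} W :=
    disjoint_left.2 fun y hy hyW => hy.2.not_gt hyW.2.1
  have hfin : μ {x ∈ Icc a b | g x ≤ c} ≠ ⊤ :=
    (measure_mono (sep_subset _ _)).trans_lt isCompact_Icc.measure_lt_top |>.ne
  calc μ {x ∈ Icc a b | g x ≤ c}
      < μ {x ∈ Icc a b | g x ≤ c} + μ W :=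
        ENNReal.lt_add_right hfin (hW.measure_ne_zero μ ⟨x, hx, hgx⟩)
    _ = μ ({x ∈ Icc a b | g x ≤ c} ∪ W) := (measure_union hdisj hW.measurableSet).symm
    _ ≤ μ {x ∈ Icc a b | g x ≤ d} := measure_mono <| union_subset
          (fun y hy => ⟨hy.1, hy.2.trans hcd.le⟩)
          fun y hy => ⟨Ioo_subset_Icc_self hy.1, hy.2.2.le⟩

theorem measure_setOf_le_sInf_image_Icc {μ : Measure ℝ} {g : ℝ → ℝ} {a b : ℝ}
    (hg : ContinuousOn g (Icc a b)) (hlevel : ∀ c, μ {x ∈ Icc a b | g x = c} = 0) :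
    μ {x ∈ Icc a b | g x ≤ sInf (g '' Icc a b)} = 0 :=
  measure_mono_null (t := {x ∈ Icc a b | g x = sInf (g '' Icc a b)})
    (fun _ hx => ⟨hx.1, hx.2.antisymm (hg.sInf_image_Icc_le hx.1)⟩) (hlevel _)

theorem toReal_volume_setOf_le_sSup_image_Icc {g : ℝ → ℝ} {a b : ℝ} (hab : a ≤ b)
    (hg : ContinuousOn g (Icc a b)) :
    (volume {x ∈ Icc a b | g x ≤ sSup (g '' Icc a b)}).toReal = b - a := by
  rw [sep_eq_self_iff_mem_true.2 fun _ => hg.le_sSup_image_Icc, Real.volume_Icc,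
    ENNReal.toReal_ofReal (sub_nonneg.2 hab)]

theorem bijOn_toReal_volume_setOf_le_Icc {g : ℝ → ℝ} {a b : ℝ} (hab : a < b)
    (hg : ContinuousOn g (Icc a b)) (hlevel : ∀ c, volume {x ∈ Icc a b | g x = c} = 0) :
    BijOn (fun c => (volume {x ∈ Icc a b | g x ≤ c}).toReal)
      (Icc (sInf (g '' Icc a b)) (sSup (g '' Icc a b))) (Icc 0 (b - a)) := by
  have himage : g '' Icc a b = Icc (sInf (g '' Icc a b)) (sSup (g '' Icc a b)) :=
    hg.image_Icc hab.le
  have hfin : ∀ c, volume {x ∈ Icc a b | g x ≤ c} ≠ ⊤ := fun c =>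
    (measure_mono (sep_subset _ _)).trans_lt isCompact_Icc.measure_lt_top |>.ne
  have hmono : StrictMonoOn (fun c => (volume {x ∈ Icc a b | g x ≤ c}).toReal)
      (Icc (sInf (g '' Icc a b)) (sSup (g '' Icc a b))) := by
    rw [← himage]
    exact fun c hc d hd hcd => (ENNReal.toReal_lt_toReal (hfin c) (hfin d)).2
      (strictMonoOn_measure_setOf_le_Icc hab hg hc hd hcd)
  have hcont : Continuous fun c => (volume {x ∈ Icc a b | g x ≤ c}).toReal :=
    ENNReal.continuousOn_toReal.comp_continuous
      (continuous_measure_setOf_le isClosed_Icc measure_Icc_lt_top.ne hg hlevel) hfin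
  have hle : sInf (g '' Icc a b) ≤ sSup (g '' Icc a b) :=
    nonempty_Icc.1 (himage ▸ (nonempty_Icc.2 hab.le).image g)
  have hrange := hcont.continuousOn.image_Icc_of_monotoneOn hle hmono.monotoneOn
  rw [measure_setOf_le_sInf_image_Icc hg hlevel, ENNReal.toReal_zero,
    toReal_volume_setOf_le_sSup_image_Icc hab.le hg] at hrange
  exact hrange ▸ hmono.injOn.bijOn_image

theorem stmt_4_general (ξmax : ℝ) (hξmax : 0 < ξmax) (b e : ℝ → ℝ)
    (hb : ∀ ξ ∈ Icc (0:ℝ) ξmax, DifferentiableAt ℝ b ξ)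
    (he : ∀ ξ ∈ Icc (0:ℝ) ξmax, DifferentiableAt ℝ e ξ)
    (hND : ∀ A : ℝ, 0 ≤ A →
      volume {ξ ∈ Icc (0:ℝ) ξmax | deriv b ξ + A * deriv e ξ = 0} = 0)
    (S : ℝ → ℝ → Set ℝ)
    (hS : ∀ A P, S A P = {ξ ∈ Icc (0:ℝ) ξmax | b ξ + A * e ξ ≤ P}) :
    ∀ A : ℝ, 0 ≤ A →
      Set.BijOn (fun P : ℝ => (volume (S A P)).toReal)
        (Icc (sInf ((fun ξ => b ξ + A * e ξ) '' Icc (0:ℝ) ξmax))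
             (sSup ((fun ξ => b ξ + A * e ξ) '' Icc (0:ℝ) ξmax)))
        (Icc (0:ℝ) ξmax) ∧
      (volume (S A (sInf ((fun ξ => b ξ + A * e ξ) '' Icc (0:ℝ) ξmax)))).toReal = 0 ∧
      (volume (S A (sSup ((fun ξ => b ξ + A * e ξ) '' Icc (0:ℝ) ξmax)))).toReal = ξmax := by
  intro A hA
  set g : ℝ → ℝ := fun ξ => b ξ + A * e ξ
  have hg : ∀ ξ ∈ Icc 0 ξmax, HasDerivAt g (deriv b ξ + A * deriv e ξ) ξ := fun ξ hξ =>
    (hb ξ hξ).hasDerivAt.add ((he ξ hξ).hasDerivAt.const_mul A)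
  have hgc : ContinuousOn g (Icc 0 ξmax) := fun ξ hξ =>
    (hg ξ hξ).continuousAt.continuousWithinAt
  have hlevel := measure_setOf_eq_eq_zero_of_hasDerivAt hg (hND A hA)
  rw [show S A = fun P => {ξ ∈ Icc 0 ξmax | g ξ ≤ P} from funext (hS A)]
  refine ⟨by simpa using bijOn_toReal_volume_setOf_le_Icc hξmax hgc hlevel, ?_, ?_⟩
  · rw [measure_setOf_le_sInf_image_Icc hgc hlevel, ENNReal.toReal_zero]
  · simpa using toReal_volume_setOf_le_sSup_image_Icc hξmax.le hgc

/-- Under Assumption ND, for every fixed `A ≥ 0` the map `P ↦ λ(S(A, P))` restricted to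
`[m_A, M_A]` is a bijection onto `[0, ξmax]`; in particular `λ(S(A, m_A)) = 0` and
`λ(S(A, M_A)) = ξmax`. -/
theorem stmt_4 (ξmax : ℝ) (hξmax : 0 < ξmax) (b e : ℝ → ℝ)
    (hb : ∀ ξ ∈ Icc (0:ℝ) ξmax, DifferentiableAt ℝ b ξ)
    (hb' : ContinuousOn (deriv b) (Icc (0:ℝ) ξmax))
    (hbpos : ∀ ξ ∈ Icc (0:ℝ) ξmax, 0 < deriv b ξ)
    (he : ∀ ξ ∈ Icc (0:ℝ) ξmax, DifferentiableAt ℝ e ξ)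
    (he' : ContinuousOn (deriv e) (Icc (0:ℝ) ξmax))
    (hepos : ∀ ξ ∈ Icc (0:ℝ) ξmax, 0 < e ξ)
    (hND : ∀ A : ℝ, 0 ≤ A →
      volume {ξ ∈ Icc (0:ℝ) ξmax | deriv b ξ + A * deriv e ξ = 0} = 0)
    (S : ℝ → ℝ → Set ℝ)
    (hS : ∀ A P, S A P = {ξ ∈ Icc (0:ℝ) ξmax | b ξ + A * e ξ ≤ P}) :
    ∀ A : ℝ, 0 ≤ A →
      Set.BijOn (fun P : ℝ => (volume (S A P)).toReal)
        (Icc (sInf ((fun ξ => b ξ + A * e ξ) '' Icc (0:ℝ) ξmax))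
             (sSup ((fun ξ => b ξ + A * e ξ) '' Icc (0:ℝ) ξmax)))
        (Icc (0:ℝ) ξmax) ∧
      (volume (S A (sInf ((fun ξ => b ξ + A * e ξ) '' Icc (0:ℝ) ξmax)))).toReal = 0 ∧
      (volume (S A (sSup ((fun ξ => b ξ + A * e ξ) '' Icc (0:ℝ) ξmax)))).toReal = ξmax :=
  stmt_4_general ξmax hξmax b e hb he hND S hS
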